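/- arXiv:2211.16185 — 2 statements merged into one kernel-verified Lean document; each statement's English description precedes it below -/
import Mathlib

section
/- Let X, Y, A, Z be finitely-valued random variables with joint pmf p such that (Y, X, Z) forms a Markov chain Y ↔ X ↔ Z and (A, X, Z) forms a Markov chain A ↔ X ↔ Z. Then I(X;(A,Z)) + I(A;Y) − I(X;A) − I(Y;Z) = I(X;(Y,Z)) + I(A;Y) − I(A;Z) − I(X;Y); that is, the DisGenIB objective with α = 0 and β = 1 equals the negative of the DisenIB objective −I(A;Y) − I(X;(Y,Z)) + I(A;Z), up to subtracting the constant I(X;Y). -/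
/-!
If `B ↔ A ↔ C` is a Markov chain, then `p(a,b,c)·p(a) = p(a,b)·p(a,c)` splits the pointwise
mutual information of `a` and `(b,c)` as `i(a;b) + i(a;c) − i(b;c)`; averaging over `p` gives
`I(A;(B,C)) = I(A;B) + I(A;C) − I(B;C)`. Applied to the chains `A ↔ X ↔ Z` and `Y ↔ X ↔ Z`, this
turns both sides of the identity into `I(X;Z) + I(A;Y) − I(A;Z) − I(Y;Z)`.
-/

/-- Mutual information `I(U;V)` of two finitely-valued random variables jointly
distributed according to the pmf `p` (given in curried form), with the convention
that terms with `p u v = 0` contribute `0` (here automatic, since `0 * log _ = 0`). -/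
noncomputable def mutualInfo {α β : Type*} [Fintype α] [Fintype β] (p : α → β → ℝ) : ℝ :=
  ∑ u, ∑ v, p u v * Real.log (p u v / ((∑ v', p u v') * (∑ u', p u' v)))

open Finset Real

lemma log_div_mul_eq_of_mul_eq_mul {q x xa xz az a z : ℝ} (hx : x ≠ 0)
    (hxa : xa ≠ 0) (hxz : xz ≠ 0) (haz : az ≠ 0) (ha : a ≠ 0) (hz : z ≠ 0)
    (h : q * x = xa * xz) :
    log (q / (x * az)) = log (xa / (x * a)) + log (xz / (x * z)) - log (az / (a * z)) := by
  rw [← log_mul (by positivity) (by positivity), ← log_div (by positivity) (by positivity)]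
  congr 1
  field_simp
  exact h

noncomputable def pointwiseMutualInfo {α β : Type*} [Fintype α] [Fintype β]
    (p : α → β → ℝ) (u : α) (v : β) : ℝ :=
  log (p u v / ((∑ v', p u v') * ∑ u', p u' v))

section TripleSums

variable {α β γ : Type*} [Fintype α] [Fintype β] [Fintype γ]

lemma mutualInfo_eq_sum_pointwiseMutualInfo (p : α → β → ℝ) :
    mutualInfo p = ∑ u, ∑ v, p u v * pointwiseMutualInfo p u v := rfl

variable (q : α → β → γ → ℝ)

lemma mutualInfo_prod_eq_sum :
    mutualInfo (fun a (bc : β × γ) => q a bc.1 bc.2)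
      = ∑ a, ∑ b, ∑ c,
          q a b c * pointwiseMutualInfo (fun a (bc : β × γ) => q a bc.1 bc.2) a (b, c) := by
  simp only [mutualInfo_eq_sum_pointwiseMutualInfo, Fintype.sum_prod_type]

lemma mutualInfo_marginal₁₂_eq_sum :
    mutualInfo (fun a b => ∑ c, q a b c)
      = ∑ a, ∑ b, ∑ c, q a b c * pointwiseMutualInfo (fun a b => ∑ c, q a b c) a b := by
  simp only [mutualInfo_eq_sum_pointwiseMutualInfo, sum_mul]

lemma mutualInfo_marginal₁₃_eq_sum :
    mutualInfo (fun a c => ∑ b, q a b c)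
      = ∑ a, ∑ b, ∑ c, q a b c * pointwiseMutualInfo (fun a c => ∑ b, q a b c) a c := by
  simp only [mutualInfo_eq_sum_pointwiseMutualInfo, sum_mul]
  exact sum_congr rfl fun a _ => sum_comm

lemma mutualInfo_marginal₂₃_eq_sum :
    mutualInfo (fun b c => ∑ a, q a b c)
      = ∑ a, ∑ b, ∑ c, q a b c * pointwiseMutualInfo (fun b c => ∑ a, q a b c) b c := by
  simp only [mutualInfo_eq_sum_pointwiseMutualInfo, sum_mul]
  exact sum_comm_cycle

variable {q}

lemma pointwiseMutualInfo_prod_eq_of_markov (h0 : ∀ a b c, 0 ≤ q a b c) {a : α} {b : β} {c : γ}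
    (hq : 0 < q a b c)
    (hM : q a b c * (∑ b', ∑ c', q a b' c') = (∑ c', q a b c') * ∑ b', q a b' c) :
    pointwiseMutualInfo (fun a (bc : β × γ) => q a bc.1 bc.2) a (b, c)
      = pointwiseMutualInfo (fun a b => ∑ c, q a b c) a b
        + pointwiseMutualInfo (fun a c => ∑ b, q a b c) a c
        - pointwiseMutualInfo (fun b c => ∑ a, q a b c) b c := by
  have hab : 0 < ∑ c', q a b c' := sum_pos' (fun _ _ => h0 _ _ _) ⟨c, mem_univ c, hq⟩
  have hac : 0 < ∑ b', q a b' c := sum_pos' (fun _ _ => h0 _ _ _) ⟨b, mem_univ b, hq⟩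
  have hbc : 0 < ∑ a', q a' b c := sum_pos' (fun _ _ => h0 _ _ _) ⟨a, mem_univ a, hq⟩
  have ha : 0 < ∑ b', ∑ c', q a b' c' :=
    sum_pos' (fun _ _ => sum_nonneg fun _ _ => h0 _ _ _) ⟨b, mem_univ b, hab⟩
  have hb : 0 < ∑ a', ∑ c', q a' b c' :=
    sum_pos' (fun _ _ => sum_nonneg fun _ _ => h0 _ _ _) ⟨a, mem_univ a, hab⟩
  have hc : 0 < ∑ a', ∑ b', q a' b' c :=
    sum_pos' (fun _ _ => sum_nonneg fun _ _ => h0 _ _ _) ⟨a, mem_univ a, hac⟩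
  simp only [pointwiseMutualInfo, Fintype.sum_prod_type]
  rw [sum_comm (γ := γ) (α := β), sum_comm (γ := γ) (α := α), sum_comm (γ := β) (α := α)]
  exact log_div_mul_eq_of_mul_eq_mul ha.ne' hab.ne' hac.ne' hbc.ne' hb.ne' hc.ne' hM

lemma mutualInfo_prod_eq_of_markov (h0 : ∀ a b c, 0 ≤ q a b c)
    (hM : ∀ a b c, q a b c * (∑ b', ∑ c', q a b' c') = (∑ c', q a b c') * ∑ b', q a b' c) :
    mutualInfo (fun a (bc : β × γ) => q a bc.1 bc.2)
      = mutualInfo (fun a b => ∑ c, q a b c) + mutualInfo (fun a c => ∑ b, q a b c)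
        - mutualInfo (fun b c => ∑ a, q a b c) := by
  rw [mutualInfo_prod_eq_sum, mutualInfo_marginal₁₂_eq_sum, mutualInfo_marginal₁₃_eq_sum,
    mutualInfo_marginal₂₃_eq_sum]
  simp only [← sum_add_distrib, ← sum_sub_distrib, ← mul_add, ← mul_sub]
  refine sum_congr rfl fun a _ => sum_congr rfl fun b _ => sum_congr rfl fun c _ => ?_
  rcases (h0 a b c).eq_or_lt with hq | hq
  · rw [← hq, zero_mul, zero_mul]
  · rw [pointwiseMutualInfo_prod_eq_of_markov h0 hq (hM a b c)]

end TripleSums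

theorem disGenIB_eq_neg_disenIB_general
    {X Y A Z : Type*} [Fintype X] [Fintype Y] [Fintype A] [Fintype Z]
    (p : X → Y → A → Z → ℝ)
    (hp0 : ∀ x y a z, 0 ≤ p x y a z)
    -- Markov chain `Y ↔ X ↔ Z`, i.e. `p(x,y,z)·p(x) = p(x,y)·p(x,z)`:
    (hMarkovYXZ : ∀ x y z,
      (∑ a, p x y a z) * (∑ y', ∑ a, ∑ z', p x y' a z')
        = (∑ a, ∑ z', p x y a z') * (∑ y', ∑ a, p x y' a z))
    -- Markov chain `A ↔ X ↔ Z`, i.e. `p(x,a,z)·p(x) = p(x,a)·p(x,z)`: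
    (hMarkovAXZ : ∀ x a z,
      (∑ y, p x y a z) * (∑ y, ∑ a', ∑ z', p x y a' z')
        = (∑ y, ∑ z', p x y a z') * (∑ y, ∑ a', p x y a' z)) :
    mutualInfo (fun x (az : A × Z) => ∑ y, p x y az.1 az.2)
        + mutualInfo (fun a y => ∑ x, ∑ z, p x y a z)
        - mutualInfo (fun x a => ∑ y, ∑ z, p x y a z)
        - mutualInfo (fun y z => ∑ x, ∑ a, p x y a z)
      = mutualInfo (fun x (yz : Y × Z) => ∑ a, p x yz.1 a yz.2)
        + mutualInfo (fun a y => ∑ x, ∑ z, p x y a z)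
        - mutualInfo (fun a z => ∑ x, ∑ y, p x y a z)
        - mutualInfo (fun x y => ∑ a, ∑ z, p x y a z) := by
  have hXAZ := mutualInfo_prod_eq_of_markov (q := fun x a z => ∑ y, p x y a z)
    (fun x a z => sum_nonneg fun y _ => hp0 x y a z) fun x a z => by
      simpa only [sum_comm (γ := Z) (α := Y), sum_comm (γ := A) (α := Y)] using hMarkovAXZ x a z
  have hXYZ := mutualInfo_prod_eq_of_markov (q := fun x y z => ∑ a, p x y a z)
    (fun x y z => sum_nonneg fun a _ => hp0 x y a z) fun x y z => by
      simpa only [sum_comm (γ := Z) (α := A)] using hMarkovYXZ x y z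
  rw [hXAZ, hXYZ]
  -- sorting every nested sum into the order `y, a, z` identifies equal marginals syntactically
  simp only [sum_comm (γ := Z) (α := Y), sum_comm (γ := Z) (α := A), sum_comm (γ := A) (α := Y)]
  ring

/-- **Theorem 4** (DisenIB is a special case of DisGenIB).
Given the Markov chains `Y ↔ X ↔ Z` and `A ↔ X ↔ Z`,
`I(X;(A,Z)) + I(A;Y) − I(X;A) − I(Y;Z) = I(X;(Y,Z)) + I(A;Y) − I(A;Z) − I(X;Y)`:
the DisGenIB objective with `α = 0`, `β = 1` equals the negative DisenIB objective
up to subtracting the constant `I(X;Y)`. -/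
theorem disGenIB_eq_neg_disenIB
    {X Y A Z : Type*} [Fintype X] [Fintype Y] [Fintype A] [Fintype Z]
    [Nonempty X] [Nonempty Y] [Nonempty A] [Nonempty Z]
    (p : X → Y → A → Z → ℝ)
    (hp0 : ∀ x y a z, 0 ≤ p x y a z)
    (hp1 : ∑ x, ∑ y, ∑ a, ∑ z, p x y a z = 1)
    -- Markov chain `Y ↔ X ↔ Z`, i.e. `p(x,y,z)·p(x) = p(x,y)·p(x,z)`:
    (hMarkovYXZ : ∀ x y z,
      (∑ a, p x y a z) * (∑ y', ∑ a, ∑ z', p x y' a z')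
        = (∑ a, ∑ z', p x y a z') * (∑ y', ∑ a, p x y' a z))
    -- Markov chain `A ↔ X ↔ Z`, i.e. `p(x,a,z)·p(x) = p(x,a)·p(x,z)`:
    (hMarkovAXZ : ∀ x a z,
      (∑ y, p x y a z) * (∑ y, ∑ a', ∑ z', p x y a' z')
        = (∑ y, ∑ z', p x y a z') * (∑ y, ∑ a', p x y a' z)) :
    mutualInfo (fun x (az : A × Z) => ∑ y, p x y az.1 az.2)
        + mutualInfo (fun a y => ∑ x, ∑ z, p x y a z)
        - mutualInfo (fun x a => ∑ y, ∑ z, p x y a z)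
        - mutualInfo (fun y z => ∑ x, ∑ a, p x y a z)
      = mutualInfo (fun x (yz : Y × Z) => ∑ a, p x yz.1 a yz.2)
        + mutualInfo (fun a y => ∑ x, ∑ z, p x y a z)
        - mutualInfo (fun a z => ∑ x, ∑ y, p x y a z)
        - mutualInfo (fun x y => ∑ a, ∑ z, p x y a z) :=
  disGenIB_eq_neg_disenIB_general p hp0 hMarkovYXZ hMarkovAXZ
end

section
/- Let X, Y, Z be finitely-valued random variables with joint pmf p such that (Y, X, Z) forms a Markov chain Y ↔ X ↔ Z and p(x) > 0 for all x, and let α ≥ 0 be real. Let q(·|y,z) be, for each pair (y,z), a pmf on the value set of X with q(x|y,z) > 0 whenever p(x,y,z) > 0, and let r be a pmf on the value set of Z with r(z) > 0 whenever p(z) > 0. Then I(X;(Y,Z)) − (1+α)·I(Y;Z) ≥ (2+α)·( Σ_{x,y,z} p(x,y,z)·log q(x|y,z) + H(X) ) − (1+α)·Σ_x p(x)·D( p(·|x) ‖ r ) − (1+α)·I(X;Y), where p(·|x) is the conditional pmf of Z given X = x. -/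
open Real Finset

lemma sub_le_mul_log_div {a b : ℝ} (ha : 0 ≤ a) (hb : 0 ≤ b) (hab : 0 < a → 0 < b) :
    a - b ≤ a * log (a / b) := by
  rcases ha.eq_or_lt with rfl | ha
  · simpa using hb
  · have hb := hab ha
    have h := mul_le_mul_of_nonneg_left (one_sub_inv_le_log_of_pos (div_pos ha hb)) ha.le
    rwa [inv_div, mul_sub, mul_one, mul_div_cancel₀ _ ha.ne'] at h

lemma sum_sub_sum_le_sum_mul_log_div {ι : Type*} [Fintype ι] {f g : ι → ℝ}
    (hf : ∀ i, 0 ≤ f i) (hg : ∀ i, 0 ≤ g i) (hfg : ∀ i, 0 < f i → 0 < g i) :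
    ∑ i, f i - ∑ i, g i ≤ ∑ i, f i * log (f i / g i) := by
  rw [← sum_sub_distrib]
  exact sum_le_sum fun i _ => sub_le_mul_log_div (hf i) (hg i) (hfg i)

lemma sum_pos_of_nonneg_of_pos {ι : Type*} [Fintype ι] {f : ι → ℝ} (hf : ∀ i, 0 ≤ f i) {i : ι}
    (hi : 0 < f i) : 0 < ∑ j, f j :=
  sum_pos' (fun j _ => hf j) ⟨i, mem_univ i, hi⟩

lemma mul_eq_mul_left_of_pos_imp {a b c : ℝ} (ha : 0 ≤ a) (h : 0 < a → b = c) : a * b = a * c := by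
  rcases ha.eq_or_lt with rfl | ha
  · simp
  · rw [h ha]

section TwoVariables

variable {U V : Type*} [Fintype U] [Fintype V] {p : U → V → ℝ}

theorem sum_mul_log_add_entropy_le_mutualInfo (hp0 : ∀ u v, 0 ≤ p u v)
    (hp1 : ∑ u, ∑ v, p u v = 1) (q : V → U → ℝ) (hq0 : ∀ v u, 0 ≤ q v u)
    (hq1 : ∀ v, ∑ u, q v u = 1) (hqpos : ∀ u v, 0 < p u v → 0 < q v u) :
    (∑ u, ∑ v, p u v * log (q v u)) + (-∑ u, (∑ v, p u v) * log (∑ v, p u v))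
      ≤ mutualInfo p := by
  have gibbs := sum_sub_sum_le_sum_mul_log_div (ι := U × V) (f := fun w => p w.1 w.2)
    (g := fun w => (∑ u, p u w.2) * q w.2 w.1) (fun w => hp0 _ _)
    (fun w => mul_nonneg (sum_nonneg fun u _ => hp0 u w.2) (hq0 _ _))
    (fun w hw => mul_pos (sum_pos_of_nonneg_of_pos (fun u => hp0 u w.2) hw) (hqpos _ _ hw))
  have hmix : ∑ u, ∑ v, (∑ u', p u' v) * q v u = 1 := by
    rw [sum_comm]
    simp_rw [← mul_sum, hq1, mul_one]
    rw [sum_comm, hp1]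
  simp only [Fintype.sum_prod_type, hp1, hmix, sub_self] at gibbs
  have hpointwise : ∀ u v, p u v * log (p u v / ((∑ v', p u v') * ∑ u', p u' v))
      - p u v * log (q v u) + p u v * log (∑ v', p u v')
      = p u v * log (p u v / ((∑ u', p u' v) * q v u)) := by
    intro u v
    rw [← mul_sub, ← mul_add]
    refine mul_eq_mul_left_of_pos_imp (hp0 u v) fun h => ?_
    have hu := sum_pos_of_nonneg_of_pos (hp0 u) h
    have hv := sum_pos_of_nonneg_of_pos (fun u => hp0 u v) h
    have hq := hqpos u v h
    rw [log_div h.ne' (by positivity), log_div h.ne' (by positivity), log_mul hu.ne' hv.ne',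
      log_mul hv.ne' hq.ne']
    ring
  have hgap : mutualInfo p - ∑ u, ∑ v, p u v * log (q v u) + ∑ u, ∑ v, p u v * log (∑ v', p u v')
      = ∑ u, ∑ v, p u v * log (p u v / ((∑ u', p u' v) * q v u)) := by
    simp only [mutualInfo, ← sum_sub_distrib, ← sum_add_distrib, hpointwise]
  simp only [sum_mul]
  linarith

theorem mutualInfo_le_sum_mul_klDiv (hp0 : ∀ u v, 0 ≤ p u v) (hp1 : ∑ u, ∑ v, p u v = 1)
    (r : V → ℝ) (hr0 : ∀ v, 0 ≤ r v) (hr1 : ∑ v, r v = 1)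
    (hrpos : ∀ v, 0 < ∑ u, p u v → 0 < r v) :
    mutualInfo p ≤ ∑ u, (∑ v, p u v) *
      ∑ v, (p u v / ∑ v', p u v') * log ((p u v / ∑ v', p u v') / r v) := by
  have gibbs := sum_sub_sum_le_sum_mul_log_div (f := fun v => ∑ u, p u v) (g := r)
    (fun v => sum_nonneg fun u _ => hp0 u v) hr0 hrpos
  rw [sum_comm] at hp1
  simp only [hp1, hr1, sub_self] at gibbs
  have hpointwise : ∀ u v,
      (∑ v', p u v') * ((p u v / ∑ v', p u v') * log ((p u v / ∑ v', p u v') / r v))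
        = p u v * log (p u v / ((∑ v', p u v') * ∑ u', p u' v))
          + p u v * log ((∑ u', p u' v) / r v) := by
    intro u v
    rcases (hp0 u v).eq_or_lt with h | h
    · simp [← h]
    have hu := sum_pos_of_nonneg_of_pos (hp0 u) h
    have hv := sum_pos_of_nonneg_of_pos (fun u => hp0 u v) h
    have hr := hrpos v hv
    rw [← mul_assoc, mul_div_cancel₀ _ hu.ne', ← mul_add, ← log_mul (by positivity) (by positivity)]
    congr 2
    field_simp
  calc mutualInfo p ≤ mutualInfo p + ∑ v, (∑ u, p u v) * log ((∑ u, p u v) / r v) :=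
        le_add_of_nonneg_right gibbs
    _ = _ := by
      simp only [mutualInfo, mul_sum, hpointwise, sum_add_distrib, sum_mul]
      rw [sum_comm (f := fun v u => p u v * log ((∑ u', p u' v) / r v))]

end TwoVariables

section ThreeVariables

variable {X Y Z : Type*} [Fintype X] [Fintype Y] [Fintype Z] {p : X → Y → Z → ℝ}

lemma sum_marginalYZ_mul (p : X → Y → Z → ℝ) (F : Y → Z → ℝ) :
    ∑ y, ∑ z, (∑ x, p x y z) * F y z = ∑ x, ∑ y, ∑ z, p x y z * F y z := by
  simp only [sum_mul]
  exact (sum_congr rfl fun _ _ => sum_comm).trans sum_comm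

lemma sum_marginalXY_mul (p : X → Y → Z → ℝ) (F : X → Y → ℝ) :
    ∑ x, ∑ y, (∑ z, p x y z) * F x y = ∑ x, ∑ y, ∑ z, p x y z * F x y := by
  simp only [sum_mul]

lemma sum_marginalXZ_mul (p : X → Y → Z → ℝ) (F : X → Z → ℝ) :
    ∑ x, ∑ z, (∑ y, p x y z) * F x z = ∑ x, ∑ y, ∑ z, p x y z * F x z := by
  simp only [sum_mul]
  exact sum_congr rfl fun _ _ => sum_comm

lemma mutualInfo_prod_add_mutualInfo_eq_of_markov (hp0 : ∀ x y z, 0 ≤ p x y z)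
    (hMarkov : ∀ x y z,
      p x y z * (∑ y', ∑ z', p x y' z') = (∑ z', p x y z') * (∑ y', p x y' z)) :
    mutualInfo (fun x (yz : Y × Z) => p x yz.1 yz.2) + mutualInfo (fun y z => ∑ x, p x y z)
      = mutualInfo (fun x y => ∑ z, p x y z) + mutualInfo (fun x z => ∑ y, p x y z) := by
  have hY : ∀ y, ∑ z, ∑ x, p x y z = ∑ x, ∑ z, p x y z := fun y => sum_comm
  have hZ : ∀ z, ∑ y, ∑ x, p x y z = ∑ x, ∑ y, p x y z := fun z => sum_comm
  have hX : ∀ x, ∑ z, ∑ y, p x y z = ∑ y, ∑ z, p x y z := fun x => sum_comm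
  simp only [mutualInfo, Fintype.sum_prod_type, hY, hZ, hX, sum_marginalYZ_mul p,
    sum_marginalXY_mul p, sum_marginalXZ_mul p]
  simp only [← sum_add_distrib, ← mul_add]
  refine sum_congr rfl fun x _ => sum_congr rfl fun y _ => sum_congr rfl fun z _ =>
    mul_eq_mul_left_of_pos_imp (hp0 x y z) fun h => ?_
  have hxy := sum_pos_of_nonneg_of_pos (hp0 x y) h
  have hxz := sum_pos_of_nonneg_of_pos (fun y => hp0 x y z) h
  have hyz := sum_pos_of_nonneg_of_pos (fun x => hp0 x y z) h
  have hx := sum_pos_of_nonneg_of_pos (fun y => sum_nonneg fun z _ => hp0 x y z) hxy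
  have hy := sum_pos_of_nonneg_of_pos (fun x => sum_nonneg fun z _ => hp0 x y z) hxy
  have hz := sum_pos_of_nonneg_of_pos (fun x => sum_nonneg fun y _ => hp0 x y z) hxz
  rw [← log_mul (by positivity) (by positivity), ← log_mul (by positivity) (by positivity)]
  congr 1
  field_simp
  linear_combination hMarkov x y z

end ThreeVariables

theorem disGenIB_ge_cvae_objective_general
    {X Y Z : Type*} [Fintype X] [Fintype Y] [Fintype Z]
    (p : X → Y → Z → ℝ)
    (hp0 : ∀ x y z, 0 ≤ p x y z)
    (hp1 : ∑ x, ∑ y, ∑ z, p x y z = 1)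
    (hMarkov : ∀ x y z,
      p x y z * (∑ y', ∑ z', p x y' z') = (∑ z', p x y z') * (∑ y', p x y' z))
    (α : ℝ) (hα : 0 ≤ α)
    (q : Y → Z → X → ℝ)
    (hq0 : ∀ y z x, 0 ≤ q y z x)
    (hq1 : ∀ y z, ∑ x, q y z x = 1)
    (hqpos : ∀ x y z, 0 < p x y z → 0 < q y z x)
    (r : Z → ℝ)
    (hr0 : ∀ z, 0 ≤ r z)
    (hr1 : ∑ z, r z = 1)
    (hrpos : ∀ z, 0 < ∑ x, ∑ y, p x y z → 0 < r z) :
    mutualInfo (fun x (yz : Y × Z) => p x yz.1 yz.2)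
        - (1 + α) * mutualInfo (fun y z => ∑ x, p x y z)
      ≥ (2 + α) * ((∑ x, ∑ y, ∑ z, p x y z * Real.log (q y z x))
            + (- ∑ x, (∑ y, ∑ z, p x y z) * Real.log (∑ y, ∑ z, p x y z)))
        - (1 + α) * ∑ x, (∑ y, ∑ z, p x y z) *
            (∑ z, ((∑ y, p x y z) / (∑ y, ∑ z', p x y z'))
              * Real.log (((∑ y, p x y z) / (∑ y, ∑ z', p x y z')) / r z))
        - (1 + α) * mutualInfo (fun x y => ∑ z, p x y z) := by
  have hchain := mutualInfo_prod_add_mutualInfo_eq_of_markov hp0 hMarkov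
  have hvar := sum_mul_log_add_entropy_le_mutualInfo (p := fun x (yz : Y × Z) => p x yz.1 yz.2)
    (fun x yz => hp0 x yz.1 yz.2) (by simpa only [Fintype.sum_prod_type] using hp1)
    (fun yz x => q yz.1 yz.2 x) (fun yz x => hq0 _ _ x) (fun yz => hq1 _ _)
    (fun x yz => hqpos x _ _)
  have hkl := mutualInfo_le_sum_mul_klDiv (p := fun x z => ∑ y, p x y z)
    (fun x z => sum_nonneg fun y _ => hp0 x y z)
    (by rw [← hp1]; exact sum_congr rfl fun x _ => sum_comm) r hr0 hr1 hrpos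
  have hX : ∀ x, ∑ z, ∑ y, p x y z = ∑ y, ∑ z, p x y z := fun x => sum_comm
  simp only [Fintype.sum_prod_type] at hvar
  simp only [hX] at hkl
  have h1α : (0 : ℝ) ≤ 1 + α := by linarith
  have h2α : (0 : ℝ) ≤ 2 + α := by linarith
  linarith [mul_le_mul_of_nonneg_left hvar h2α, mul_le_mul_of_nonneg_left hkl h1α,
    congrArg ((1 + α) * ·) hchain]

/-- Eqs. 12–14 of the paper combined (proof of Theorem 5): under the Markov chain
`Y ↔ X ↔ Z`, the DisGenIB objective with `A = Y` is lower-bounded by the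
CVAE-type objective:
`I(X;(Y,Z)) − (1+α)·I(Y;Z) ≥ (2+α)·(Σ p·log q(x|y,z) + H(X)) − (1+α)·Σ_x p(x)·D(p(·|x)‖r) − (1+α)·I(X;Y)`. -/
theorem disGenIB_ge_cvae_objective
    {X Y Z : Type*} [Fintype X] [Fintype Y] [Fintype Z]
    [Nonempty X] [Nonempty Y] [Nonempty Z]
    (p : X → Y → Z → ℝ)
    (hp0 : ∀ x y z, 0 ≤ p x y z)
    (hp1 : ∑ x, ∑ y, ∑ z, p x y z = 1)
    (hMarkov : ∀ x y z,
      p x y z * (∑ y', ∑ z', p x y' z') = (∑ z', p x y z') * (∑ y', p x y' z))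
    (hpx : ∀ x, 0 < ∑ y, ∑ z, p x y z)
    (α : ℝ) (hα : 0 ≤ α)
    (q : Y → Z → X → ℝ)
    (hq0 : ∀ y z x, 0 ≤ q y z x)
    (hq1 : ∀ y z, ∑ x, q y z x = 1)
    (hqpos : ∀ x y z, 0 < p x y z → 0 < q y z x)
    (r : Z → ℝ)
    (hr0 : ∀ z, 0 ≤ r z)
    (hr1 : ∑ z, r z = 1)
    (hrpos : ∀ z, 0 < ∑ x, ∑ y, p x y z → 0 < r z) :
    mutualInfo (fun x (yz : Y × Z) => p x yz.1 yz.2)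
        - (1 + α) * mutualInfo (fun y z => ∑ x, p x y z)
      ≥ (2 + α) * ((∑ x, ∑ y, ∑ z, p x y z * Real.log (q y z x))
            + (- ∑ x, (∑ y, ∑ z, p x y z) * Real.log (∑ y, ∑ z, p x y z)))
        - (1 + α) * ∑ x, (∑ y, ∑ z, p x y z) *
            (∑ z, ((∑ y, p x y z) / (∑ y, ∑ z', p x y z'))
              * Real.log (((∑ y, p x y z) / (∑ y, ∑ z', p x y z')) / r z))
        - (1 + α) * mutualInfo (fun x y => ∑ z, p x y z) :=
  disGenIB_ge_cvae_objective_general p hp0 hp1 hMarkov α hα q hq0 hq1 hqpos r hr0 hr1 hrpos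
end
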